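/- arXiv:2103.07989 — 4 statements merged into one kernel-verified Lean document; each statement's English description precedes it below -/
import Mathlib

section
/- Let q : Π → ℝ be a strictly positive probability density on Π = {(α1,α2) : 0 ≤ α1 < α2 ≤ 1} with ∬_Π q = 1, and let R0_nat > R0_int > 1. Define R̂⁰(I) = R0_nat - (R0_nat - R0_int)∫₀^I∫₀^{α2} q dα1 dα2 and R̂¹(I) = R0_int + (R0_nat - R0_int)∫_I^1∫_I^{α2} q dα1 dα2. Then R̂⁰(I) > R̂¹(I) for all I ∈ (0,1), and R̂⁰(0) = R̂¹(0) = R0_nat, R̂⁰(1) = R̂¹(1) = R0_int. -/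
open MeasureTheory Set

/-- R̂⁰(I) > R̂¹(I) on (0,1) and equality of the two envelope functions at the
endpoints, for a strictly positive normalized Preisach density q. -/
theorem stmt_5 (R0nat R0int : ℝ) (hR : R0nat > R0int) (hRint : R0int > 1)
    (T : Set (ℝ × ℝ)) (hT : T = {α : ℝ × ℝ | 0 ≤ α.1 ∧ α.1 < α.2 ∧ α.2 ≤ 1})
    (q : ℝ × ℝ → ℝ) (hmeas : Measurable q) (K : ℝ)
    (hpos : ∀ α ∈ T, 0 < q α) (hbdd : ∀ α ∈ T, q α ≤ K)
    (hint : IntegrableOn q T volume)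
    (hnorm : ∫ α in T, q α ∂volume = 1)
    (Rhat0 Rhat1 : ℝ → ℝ)
    (hRhat0 : ∀ I, Rhat0 I =
      R0nat - (R0nat - R0int) * ∫ α in {α ∈ T | α.2 ≤ I}, q α ∂volume)
    (hRhat1 : ∀ I, Rhat1 I =
      R0int + (R0nat - R0int) * ∫ α in {α ∈ T | I ≤ α.1}, q α ∂volume) :
    (∀ I ∈ Ioo (0:ℝ) 1, Rhat0 I > Rhat1 I) ∧
    Rhat0 0 = R0nat ∧ Rhat1 0 = R0nat ∧
    Rhat0 1 = R0int ∧ Rhat1 1 = R0int := by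
  have hTmeas : MeasurableSet T := by
    rw [hT]
    exact (measurableSet_le measurable_const measurable_fst).inter
      ((measurableSet_lt measurable_fst measurable_snd).inter
        (measurableSet_le measurable_snd measurable_const))
  have hD : (0:ℝ) < R0nat - R0int := sub_pos.2 hR
  refine ⟨?_, ?_, ?_, ?_, ?_⟩
  · intro I hI
    obtain ⟨hI0, hI1⟩ := hI
    set A : Set (ℝ × ℝ) := {α ∈ T | α.2 ≤ I} with hA
    set B : Set (ℝ × ℝ) := {α ∈ T | I ≤ α.1} with hB
    set S : Set (ℝ × ℝ) := Ico 0 I ×ˢ Ioc I 1 with hS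
    have hAm : MeasurableSet A :=
      hTmeas.inter (measurableSet_le measurable_snd measurable_const)
    have hBm : MeasurableSet B :=
      hTmeas.inter (measurableSet_le measurable_const measurable_fst)
    have hSm : MeasurableSet S := measurableSet_Ico.prod measurableSet_Ioc
    have hST : S ⊆ T := by
      rw [hT]
      rintro ⟨a, b⟩ ⟨⟨ha0, haI⟩, hbI, hb1⟩
      exact ⟨ha0, lt_trans haI hbI, hb1⟩
    have hIA : IntegrableOn q A := hint.mono_set (fun α hα => hα.1)
    have hIB : IntegrableOn q B := hint.mono_set (fun α hα => hα.1)
    have hIS : IntegrableOn q S := hint.mono_set hST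
    have hdAB : Disjoint A B := by
      rw [Set.disjoint_left]
      rintro α ⟨hαT, h2⟩ ⟨_, h1⟩
      rw [hT] at hαT
      exact absurd (lt_of_lt_of_le hαT.2.1 h2) (not_lt.2 h1)
    have hdABS : Disjoint (A ∪ B) S := by
      rw [Set.disjoint_left]
      rintro ⟨a, b⟩ (⟨_, h2⟩ | ⟨_, h1⟩) ⟨⟨_, haI⟩, hbI, _⟩
      · exact absurd (lt_of_lt_of_le hbI h2) (lt_irrefl I)
      · exact absurd (lt_of_le_of_lt h1 haI) (lt_irrefl I)
    have hunion : T = (A ∪ B) ∪ S := by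
      ext ⟨a, b⟩
      constructor
      · intro hαT
        have hαT' := hαT
        rw [hT] at hαT'
        obtain ⟨ha0, hab, hb1⟩ := hαT'
        by_cases h2 : b ≤ I
        · exact Or.inl (Or.inl ⟨hαT, h2⟩)
        · by_cases h1 : I ≤ a
          · exact Or.inl (Or.inr ⟨hαT, h1⟩)
          · exact Or.inr ⟨⟨ha0, not_le.1 h1⟩, not_le.1 h2, hb1⟩
      · rintro (h | h)
        · rcases h with h | h
          · exact h.1
          · exact h.1
        · exact hST h
    have hsum : ((∫ α in A, q α ∂volume) + ∫ α in B, q α ∂volume)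
        + ∫ α in S, q α ∂volume = 1 := by
      rw [← setIntegral_union hdAB hBm hIA hIB,
        ← setIntegral_union hdABS hSm (hIA.union hIB) hIS, ← hunion, hnorm]
    have hSsub : S ⊆ Function.support q ∩ S :=
      fun α hα => ⟨ne_of_gt (hpos α (hST hα)), hα⟩
    have hSvol : (0 : ENNReal) < volume S := by
      rw [hS, Measure.volume_eq_prod, Measure.prod_prod, Real.volume_Ico,
        Real.volume_Ioc]
      exact ENNReal.mul_pos
        (by simp [ENNReal.ofReal_pos]; linarith)
        (by simp [ENNReal.ofReal_pos]; linarith)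
    have hSpos : 0 < ∫ α in S, q α ∂volume := by
      rw [setIntegral_pos_iff_support_of_nonneg_ae
        (ae_restrict_of_forall_mem hSm (fun α hα => (hpos α (hST hα)).le)) hIS]
      exact lt_of_lt_of_le hSvol (measure_mono hSsub)
    rw [hRhat0 I, hRhat1 I, ← hA, ← hB]
    nlinarith [hsum, hSpos, hD]
  · have h0 : {α ∈ T | α.2 ≤ (0:ℝ)} = ∅ := by
      rw [hT]
      ext ⟨a, b⟩
      simp only [mem_setOf_eq, mem_sep_iff, mem_empty_iff_false, iff_false, not_and]
      rintro ⟨ha0, hab, _⟩ hb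
      linarith
    rw [hRhat0 0, h0]
    simp
  · have h0 : {α ∈ T | (0:ℝ) ≤ α.1} = T := by
      ext α
      simp only [mem_sep_iff, and_iff_left_iff_imp]
      intro hα
      rw [hT] at hα
      exact hα.1
    rw [hRhat1 0, h0, hnorm]
    ring
  · have h1 : {α ∈ T | α.2 ≤ (1:ℝ)} = T := by
      ext α
      simp only [mem_sep_iff, and_iff_left_iff_imp]
      intro hα
      rw [hT] at hα
      exact hα.2.2
    rw [hRhat0 1, h1, hnorm]
    ring
  · have h1 : {α ∈ T | (1:ℝ) ≤ α.1} = ∅ := by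
      rw [hT]
      ext ⟨a, b⟩
      simp only [mem_setOf_eq, mem_sep_iff, mem_empty_iff_false, iff_false, not_and]
      rintro ⟨ha0, hab, hb1⟩ ha
      linarith
    rw [hRhat1 1, h1]
    simp
end

section
/- Let R̂⁰, R̂¹ : [0,1] → ℝ be continuous strictly decreasing functions with R̂⁰(I) > R̂¹(I) > 1 for all I ∈ (0,1), and let ρ ∈ (0,1). For θ ∈ [0,1] define R̂^θ(I) = θ R̂¹(I) + (1-θ) R̂⁰(I), and let I*_θ be the unique solution in (0,1) of I = (1 - 1/R̂^θ(I))ρ. Then the map θ ↦ I*_θ is continuous and strictly decreasing on [0,1]. -/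
open Set

/-- The endemic equilibrium value I*_θ of the interpolated reproduction function
R̂^θ = θR̂¹ + (1-θ)R̂⁰ depends continuously and strictly decreasingly on θ. -/
theorem stmt_7 (Rhat0 Rhat1 : ℝ → ℝ)
    (hcont0 : ContinuousOn Rhat0 (Icc 0 1)) (hcont1 : ContinuousOn Rhat1 (Icc 0 1))
    (hanti0 : StrictAntiOn Rhat0 (Icc 0 1)) (hanti1 : StrictAntiOn Rhat1 (Icc 0 1))
    (hgt : ∀ I ∈ Icc (0:ℝ) 1, 1 < Rhat1 I ∧ Rhat1 I ≤ Rhat0 I)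
    (hstrict : ∀ I ∈ Ioo (0:ℝ) 1, Rhat1 I < Rhat0 I)
    (ρ : ℝ) (hρ0 : 0 < ρ) (hρ1 : ρ < 1)
    (Rθ : ℝ → ℝ → ℝ)
    (hRθ : ∀ θ I, Rθ θ I = θ * Rhat1 I + (1 - θ) * Rhat0 I)
    (Istar : ℝ → ℝ)
    (hIstar : ∀ θ ∈ Icc (0:ℝ) 1, Istar θ ∈ Ioo (0:ℝ) 1 ∧
      Istar θ = (1 - 1 / Rθ θ (Istar θ)) * ρ) :
    ContinuousOn Istar (Icc 0 1) ∧ StrictAntiOn Istar (Icc 0 1) := by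
  -- R value is > 1 on the square
  have hRval : ∀ θ ∈ Icc (0:ℝ) 1, ∀ I ∈ Icc (0:ℝ) 1, 1 < Rθ θ I := by
    intro θ hθ I hI
    rw [hRθ]
    obtain ⟨h1, h2⟩ := hgt I hI
    nlinarith [hθ.1, hθ.2]
  -- antitone in I
  have hRanti : ∀ θ ∈ Icc (0:ℝ) 1, ∀ I ∈ Icc (0:ℝ) 1, ∀ J ∈ Icc (0:ℝ) 1,
      I ≤ J → Rθ θ J ≤ Rθ θ I := by
    intro θ hθ I hI J hJ hIJ
    rcases eq_or_lt_of_le hIJ with rfl | h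
    · exact le_refl _
    · rw [hRθ, hRθ]
      have h0 := hanti0 hI hJ h
      have h1 := hanti1 hI hJ h
      nlinarith [hθ.1, hθ.2]
  -- strictly antitone in θ (at interior I)
  have hRθanti : ∀ I ∈ Ioo (0:ℝ) 1, ∀ θ1 θ2 : ℝ, θ1 < θ2 → Rθ θ2 I < Rθ θ1 I := by
    intro I hI θ1 θ2 h
    rw [hRθ, hRθ]
    have := hstrict I hI
    nlinarith
  -- monotonicity of x ↦ (1 - 1/x)ρ
  have gmono : ∀ x y : ℝ, 0 < x → x ≤ y → (1 - 1/x) * ρ ≤ (1 - 1/y) * ρ := by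
    intro x y hx hxy
    have h1 : 1/y ≤ 1/x := one_div_le_one_div_of_le hx hxy
    nlinarith
  have gsmono : ∀ x y : ℝ, 0 < x → x < y → (1 - 1/x) * ρ < (1 - 1/y) * ρ := by
    intro x y hx hxy
    have h1 : 1/y < 1/x := one_div_lt_one_div_of_lt hx hxy
    nlinarith
  -- strict antitonicity of Istar
  have hAnti : StrictAntiOn Istar (Icc 0 1) := by
    intro θa hθa θb hθb hab
    obtain ⟨hIa, hEa⟩ := hIstar θa hθa
    obtain ⟨hIb, hEb⟩ := hIstar θb hθb
    by_contra h
    push_neg at h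
    have hIa' : Istar θa ∈ Icc (0:ℝ) 1 := ⟨hIa.1.le, hIa.2.le⟩
    have hIb' : Istar θb ∈ Icc (0:ℝ) 1 := ⟨hIb.1.le, hIb.2.le⟩
    have h1 : Rθ θb (Istar θb) ≤ Rθ θb (Istar θa) := hRanti θb hθb _ hIa' _ hIb' h
    have h2 : Rθ θb (Istar θa) < Rθ θa (Istar θa) := hRθanti _ hIa _ _ hab
    have hx1 : (1:ℝ) < Rθ θb (Istar θb) := hRval θb hθb _ hIb'
    have hx2 : (1:ℝ) < Rθ θb (Istar θa) := hRval θb hθb _ hIa'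
    have g1 := gmono _ _ (by linarith) h1
    have g2 := gsmono _ _ (by linarith) h2
    linarith [hEa ▸ le_refl (Istar θa), hEb ▸ le_refl (Istar θb)]
  refine ⟨?_, hAnti⟩
  -- continuity
  intro θ0 hθ0
  rw [Metric.continuousWithinAt_iff]
  intro ε hε
  obtain ⟨hI0, hE0⟩ := hIstar θ0 hθ0
  set I0 := Istar θ0 with hI0def
  set e : ℝ := min ε (min I0 (1 - I0)) / 2 with he_def
  have he0 : 0 < e := by
    have : 0 < min ε (min I0 (1 - I0)) := by
      simp only [lt_min_iff]
      exact ⟨hε, hI0.1, by linarith [hI0.2]⟩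
    linarith
  have heε : e < ε := by
    have : min ε (min I0 (1 - I0)) ≤ ε := min_le_left _ _
    linarith
  have heI0 : e ≤ I0 / 2 := by
    have : min ε (min I0 (1 - I0)) ≤ I0 := le_trans (min_le_right _ _) (min_le_left _ _)
    simp only [he_def]; linarith
  have heI1 : e ≤ (1 - I0) / 2 := by
    have : min ε (min I0 (1 - I0)) ≤ 1 - I0 := le_trans (min_le_right _ _) (min_le_right _ _)
    simp only [he_def]; linarith
  set Ip : ℝ := I0 + e with hIp_def
  set Im : ℝ := I0 - e with hIm_def
  have hIpm : Ip ∈ Icc (0:ℝ) 1 := ⟨by nlinarith [hI0.1], by nlinarith [hI0.2]⟩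
  have hImm : Im ∈ Icc (0:ℝ) 1 := ⟨by nlinarith [hI0.1], by nlinarith [hI0.2]⟩
  have hI0m : I0 ∈ Icc (0:ℝ) 1 := ⟨hI0.1.le, hI0.2.le⟩
  -- values at θ0
  have hvp : (1 - 1 / Rθ θ0 Ip) * ρ < Ip := by
    have h1 : Rθ θ0 Ip ≤ Rθ θ0 I0 := hRanti θ0 hθ0 _ hI0m _ hIpm (by linarith)
    have hx : (1:ℝ) < Rθ θ0 Ip := hRval θ0 hθ0 _ hIpm
    have := gmono _ _ (by linarith) h1
    calc (1 - 1 / Rθ θ0 Ip) * ρ ≤ (1 - 1 / Rθ θ0 I0) * ρ := this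
    _ = I0 := hE0.symm
    _ < Ip := by simp only [hIp_def]; linarith
  have hvm : Im < (1 - 1 / Rθ θ0 Im) * ρ := by
    have h1 : Rθ θ0 I0 ≤ Rθ θ0 Im := hRanti θ0 hθ0 _ hImm _ hI0m (by linarith)
    have hx : (1:ℝ) < Rθ θ0 I0 := hRval θ0 hθ0 _ hI0m
    have := gmono _ _ (by linarith) h1
    calc Im < I0 := by simp only [hIm_def]; linarith
    _ = (1 - 1 / Rθ θ0 I0) * ρ := hE0
    _ ≤ (1 - 1 / Rθ θ0 Im) * ρ := this
  -- continuity of θ ↦ g θ I at θ0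
  have hcI : ∀ I ∈ Icc (0:ℝ) 1,
      ContinuousAt (fun θ => (1 - 1 / (θ * Rhat1 I + (1 - θ) * Rhat0 I)) * ρ) θ0 := by
    intro I hI
    have hne : θ0 * Rhat1 I + (1 - θ0) * Rhat0 I ≠ 0 := by
      have := hRval θ0 hθ0 I hI
      rw [hRθ] at this
      linarith
    apply ContinuousAt.mul _ continuousAt_const
    apply ContinuousAt.sub continuousAt_const
    exact ContinuousAt.div continuousAt_const (by fun_prop) hne
  have hev : ∀ᶠ θ in nhds θ0,
      (1 - 1 / (θ * Rhat1 Ip + (1 - θ) * Rhat0 Ip)) * ρ < Ip ∧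
      Im < (1 - 1 / (θ * Rhat1 Im + (1 - θ) * Rhat0 Im)) * ρ := by
    have h1 : ∀ᶠ θ in nhds θ0,
        (1 - 1 / (θ * Rhat1 Ip + (1 - θ) * Rhat0 Ip)) * ρ < Ip := by
      apply (hcI Ip hIpm).eventually_lt continuousAt_const
      rw [← hRθ]; exact hvp
    have h2 : ∀ᶠ θ in nhds θ0,
        Im < (1 - 1 / (θ * Rhat1 Im + (1 - θ) * Rhat0 Im)) * ρ := by
      apply ContinuousAt.eventually_lt continuousAt_const (hcI Im hImm)
      rw [← hRθ]; exact hvm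
    exact h1.and h2
  rw [Metric.eventually_nhds_iff] at hev
  obtain ⟨δ, hδ0, hδ⟩ := hev
  refine ⟨δ, hδ0, ?_⟩
  intro θ hθ hdist
  obtain ⟨h1, h2⟩ := hδ hdist
  rw [← hRθ] at h1 h2
  obtain ⟨hIθ, hEθ⟩ := hIstar θ hθ
  have hIθ' : Istar θ ∈ Icc (0:ℝ) 1 := ⟨hIθ.1.le, hIθ.2.le⟩
  -- Istar θ < Ip
  have hlt : Istar θ < Ip := by
    by_contra hcon
    push_neg at hcon
    have hr : Rθ θ (Istar θ) ≤ Rθ θ Ip := hRanti θ hθ _ hIpm _ hIθ' hcon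
    have hx : (1:ℝ) < Rθ θ Ip := hRval θ hθ _ hIpm
    have hx2 : (1:ℝ) < Rθ θ (Istar θ) := hRval θ hθ _ hIθ'
    have := gmono _ _ (by linarith) hr
    have : Istar θ ≤ (1 - 1 / Rθ θ Ip) * ρ := by rw [hEθ]; exact this
    linarith
  have hgt' : Im < Istar θ := by
    by_contra hcon
    push_neg at hcon
    have hr : Rθ θ Im ≤ Rθ θ (Istar θ) := hRanti θ hθ _ hIθ' _ hImm hcon
    have hx : (1:ℝ) < Rθ θ (Istar θ) := hRval θ hθ _ hIθ'
    have hx2 : (1:ℝ) < Rθ θ Im := hRval θ hθ _ hImm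
    have := gmono _ _ (by linarith) hr
    have : (1 - 1 / Rθ θ Im) * ρ ≤ Istar θ := by rw [hEθ]; exact this
    linarith
  rw [Real.dist_eq, abs_sub_lt_iff]
  constructor
  · simp only [hIp_def] at hlt; linarith
  · simp only [hIm_def] at hgt'; linarith
end

section
/- Under the hypotheses R0_nat > R0_int > 1, ρ ∈ (0,1), and with R̂^θ(I) = θR̂¹(I) + (1-θ)R̂⁰(I) where R̂⁰ > R̂¹ on (0,1) are continuous strictly decreasing with values in [R0_int, R0_nat] and R̂⁰(0)=R̂¹(0)=R0_nat, R̂⁰(1)=R̂¹(1)=R0_int: the set of endemic equilibria {(I*_θ, 1/R̂^θ(I*_θ)) : θ ∈ [0,1]} is a nondegenerate closed subsegment of the open segment between E_int = ((1-1/R0_int)ρ, 1/R0_int) and E_nat = ((1-1/R0_nat)ρ, 1/R0_nat); in particular I*_1 < I*_0 (the segment has positive length). -/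
open Set

/-- The continuum of endemic equilibria {(I*_θ, 1/R̂^θ(I*_θ))} forms a
nondegenerate subsegment of the open segment between E_int and E_nat. -/
theorem stmt_9 (R0nat R0int : ℝ) (h1 : 1 < R0int) (h2 : R0int < R0nat)
    (ρ : ℝ) (hρ0 : 0 < ρ) (hρ1 : ρ < 1)
    (Rhat0 Rhat1 : ℝ → ℝ)
    (hcont0 : ContinuousOn Rhat0 (Icc 0 1)) (hcont1 : ContinuousOn Rhat1 (Icc 0 1))
    (hanti0 : StrictAntiOn Rhat0 (Icc 0 1)) (hanti1 : StrictAntiOn Rhat1 (Icc 0 1))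
    (hbdd : ∀ I ∈ Icc (0:ℝ) 1,
      R0int ≤ Rhat1 I ∧ Rhat1 I ≤ Rhat0 I ∧ Rhat0 I ≤ R0nat)
    (hstrict : ∀ I ∈ Ioo (0:ℝ) 1, Rhat1 I < Rhat0 I)
    (hends0 : Rhat0 0 = R0nat ∧ Rhat1 0 = R0nat)
    (hends1 : Rhat0 1 = R0int ∧ Rhat1 1 = R0int)
    (Rθ : ℝ → ℝ → ℝ)
    (hRθ : ∀ θ I, Rθ θ I = θ * Rhat1 I + (1 - θ) * Rhat0 I)
    (Istar : ℝ → ℝ)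
    (hIstar : ∀ θ ∈ Icc (0:ℝ) 1, Istar θ ∈ Ioo (0:ℝ) 1 ∧
      Istar θ = (1 - 1 / Rθ θ (Istar θ)) * ρ) :
    (∀ θ ∈ Icc (0:ℝ) 1,
      ((Istar θ, 1 / Rθ θ (Istar θ)) : ℝ × ℝ) ∈
        openSegment ℝ ((1 - 1 / R0int) * ρ, 1 / R0int)
          ((1 - 1 / R0nat) * ρ, 1 / R0nat)) ∧
    Istar 1 < Istar 0 := by
  have h1' : (0:ℝ) < R0int := by linarith
  have h2' : (0:ℝ) < R0nat := by linarith
  have hd : (0:ℝ) < 1 / R0int - 1 / R0nat := by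
    have := one_div_lt_one_div_of_lt h1' h2
    linarith
  have key : ∀ θ ∈ Icc (0:ℝ) 1,
      R0int < Rθ θ (Istar θ) ∧ Rθ θ (Istar θ) < R0nat := by
    intro θ hθ
    obtain ⟨hI, -⟩ := hIstar θ hθ
    have hIcc : Istar θ ∈ Icc (0:ℝ) 1 := ⟨le_of_lt hI.1, le_of_lt hI.2⟩
    obtain ⟨hb1, hb2, hb3⟩ := hbdd _ hIcc
    have h1low : R0int < Rhat1 (Istar θ) := by
      have := hanti1 hIcc (by norm_num : (1:ℝ) ∈ Icc (0:ℝ) 1) hI.2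
      rwa [hends1.2] at this
    have h0high : Rhat0 (Istar θ) < R0nat := by
      have := hanti0 (by norm_num : (0:ℝ) ∈ Icc (0:ℝ) 1) hIcc hI.1
      rwa [hends0.1] at this
    have eA : 0 ≤ (1 - θ) * (Rhat0 (Istar θ) - Rhat1 (Istar θ)) :=
      mul_nonneg (by linarith [hθ.2]) (by linarith)
    have eB : 0 ≤ θ * (Rhat0 (Istar θ) - Rhat1 (Istar θ)) :=
      mul_nonneg hθ.1 (by linarith)
    rw [hRθ]
    constructor <;> nlinarith
  constructor
  · intro θ hθ
    obtain ⟨hI, heq⟩ := hIstar θ hθ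
    obtain ⟨hlo, hhi⟩ := key θ hθ
    set R := Rθ θ (Istar θ) with hR
    have hRpos : 0 < R := lt_trans h1' hlo
    have hnum0 : 0 < 1 / R0int - 1 / R := by
      have := one_div_lt_one_div_of_lt h1' hlo
      linarith
    have hnum1 : 1 / R0int - 1 / R < 1 / R0int - 1 / R0nat := by
      have := one_div_lt_one_div_of_lt hRpos hhi
      linarith
    set t : ℝ := (1 / R0int - 1 / R) / (1 / R0int - 1 / R0nat) with htdef
    have ht0 : 0 < t := div_pos hnum0 hd
    have ht1 : t < 1 := (div_lt_one hd).mpr hnum1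
    have htd : t * (1 / R0int - 1 / R0nat) = 1 / R0int - 1 / R :=
      div_mul_cancel₀ _ hd.ne'
    refine ⟨1 - t, t, by linarith, ht0, by ring, ?_⟩
    rw [Prod.smul_mk, Prod.smul_mk, Prod.mk_add_mk, Prod.mk.injEq]
    constructor
    · rw [heq]
      simp only [smul_eq_mul]
      linear_combination ρ * htd
    · simp only [smul_eq_mul]
      linear_combination -htd
  · obtain ⟨hI0, heq0⟩ := hIstar 0 (by norm_num)
    obtain ⟨hI1, heq1⟩ := hIstar 1 (by norm_num)
    have hR0 : Rθ 0 (Istar 0) = Rhat0 (Istar 0) := by rw [hRθ]; ring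
    have hR1 : Rθ 1 (Istar 1) = Rhat1 (Istar 1) := by rw [hRθ]; ring
    rw [hR0] at heq0
    rw [hR1] at heq1
    by_contra hcon
    push_neg at hcon
    have hIcc0 : Istar 0 ∈ Icc (0:ℝ) 1 := ⟨le_of_lt hI0.1, le_of_lt hI0.2⟩
    have hIcc1 : Istar 1 ∈ Icc (0:ℝ) 1 := ⟨le_of_lt hI1.1, le_of_lt hI1.2⟩
    have hmono : Rhat1 (Istar 1) ≤ Rhat1 (Istar 0) := by
      rcases eq_or_lt_of_le hcon with h | h
      · rw [h]
      · exact le_of_lt (hanti1 hIcc0 hIcc1 h)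
    have hlt : Rhat1 (Istar 1) < Rhat0 (Istar 0) :=
      lt_of_le_of_lt hmono (hstrict _ hI0)
    have hpos1 : 0 < Rhat1 (Istar 1) := by linarith [(hbdd _ hIcc1).1]
    have := one_div_lt_one_div_of_lt hpos1 hlt
    have : Istar 1 < Istar 0 := by
      rw [heq0, heq1]
      have h01 : 1 / Rhat0 (Istar 0) < 1 / Rhat1 (Istar 1) := this
      nlinarith
    linarith
end

section
/- Let ρ ∈ (0,1), R0_int > 1, and 0 < ε < R0_nat - 1. Suppose R̂⁰ : [0,1] → ℝ takes values in [R0_int, R0_nat] and satisfies R̂⁰(I) < R0_int + ε whenever I ≥ I_int + ε, where I_int ≤ ρ(1 - 1/R0_int). Define f₀(I) = I - ρ(1 - 1/R̂⁰(I)), I₋ = ρ(1 - 1/R0_int), I₊ = ρ(1 - 1/R0_int) + ε. Then f₀(I₊) > 0 and f₀(I₋) ≤ 0; hence any root I*₀ of f₀ = 0 with f₀ strictly increasing satisfies I₋ ≤ I*₀ < I₊. -/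
open Set

/-- Case 1 estimate in the proof of Proposition 3: localization of the root of
f₀(I) = I - ρ(1 - 1/R̂⁰(I)) when I_int ≤ ρ(1 - 1/R0_int). -/
theorem stmt_10 (R0nat R0int : ℝ) (h1 : 1 < R0int) (h2 : R0int < R0nat)
    (ρ : ℝ) (hρ0 : 0 < ρ) (hρ1 : ρ < 1)
    (ε : ℝ) (hε0 : 0 < ε) (hε1 : ε < R0nat - 1)
    (Iint : ℝ) (hIint : Iint ≤ ρ * (1 - 1 / R0int))
    (Rhat0 : ℝ → ℝ)
    (hbdd : ∀ I, R0int ≤ Rhat0 I ∧ Rhat0 I ≤ R0nat)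
    (hclose : ∀ I, Iint + ε ≤ I → Rhat0 I < R0int + ε)
    (f0 : ℝ → ℝ) (hf0 : ∀ I, f0 I = I - ρ * (1 - 1 / Rhat0 I))
    (Iminus Iplus : ℝ)
    (hIm : Iminus = ρ * (1 - 1 / R0int)) (hIp : Iplus = ρ * (1 - 1 / R0int) + ε) :
    f0 Iplus > 0 ∧ f0 Iminus ≤ 0 ∧
    (∀ I0 : ℝ, StrictMono f0 → f0 I0 = 0 → Iminus ≤ I0 ∧ I0 < Iplus) := by
  have hR0 : (0:ℝ) < R0int := lt_trans one_pos h1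
  have hplus : f0 Iplus > 0 := by
    have hle : Iint + ε ≤ Iplus := by rw [hIp]; linarith
    have hcl := hclose Iplus hle
    have hb := (hbdd Iplus).1
    set R := Rhat0 Iplus with hR
    have hRp : (0:ℝ) < R := lt_of_lt_of_le hR0 hb
    have key : 0 < ε - ρ / R0int + ρ / (R0int + ε) := by
      have hA : ρ / R0int - ρ / (R0int + ε) = ρ * ε / (R0int * (R0int + ε)) := by
        field_simp; ring
      have hB : ρ * ε / (R0int * (R0int + ε)) < ε := by
        rw [div_lt_iff₀ (by positivity)]
        have h1' : 1 < R0int * (R0int + ε) := by nlinarith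
        nlinarith
      linarith
    have hmon : ρ / (R0int + ε) < ρ / R :=
      div_lt_div_of_pos_left hρ0 hRp hcl
    rw [hf0, ← hR, hIp]
    have e1 : ρ * (1 - 1 / R) = ρ - ρ / R := by ring
    have e2 : ρ * (1 - 1 / R0int) = ρ - ρ / R0int := by ring
    rw [e1, e2]
    linarith
  have hminus : f0 Iminus ≤ 0 := by
    have hb := (hbdd Iminus).1
    set R := Rhat0 Iminus with hR
    have hRm : (0:ℝ) < R := lt_of_lt_of_le hR0 hb
    have hinv : 1 / R ≤ 1 / R0int := one_div_le_one_div_of_le hR0 hb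
    rw [hf0, ← hR, hIm]
    nlinarith
  refine ⟨hplus, hminus, fun I0 hmono hroot => ?_⟩
  constructor
  · by_contra h
    push_neg at h
    have := hmono h
    rw [hroot] at this
    linarith
  · have : f0 I0 < f0 Iplus := by rw [hroot]; exact hplus
    exact (hmono.lt_iff_lt).mp this
end
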